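/- Suppose premiums are adjusted according to aggregate settled claims. Then for every integer u ≥ 0, every i ∈ {1,…,l} and every n ≥ 1: ψ_i(u,n+1) = Σ_{j=1}^l Σ_{x=0}^{u+c_i} t_{ij}(x)·ψ_j(u+c_i−x, n)·f_{XY}(x,0) + (1−q)·Σ_{y=1}^∞ ξ_y(u+c_i) + (1−q)·Σ_{j=1}^l Σ_{x=1}^{u+c_i−1} Σ_{y=1}^{u+c_i−x} t_{ij}(x+y)·ψ_j(u+c_i−x−y, n)·f_{XY}(x,y) + q·Σ_{j=1}^l Σ_{x=1}^{u+c_i} Σ_{y=1}^{u+c_i−x+c_j} t_{ij}(x)·ψ'_j(u+c_i−x;y,n)·f_{XY}(x,y) + q·Σ_{j=1}^l Σ_{x=1}^{u+c_i} Σ_{y=u+c_i−x+c_j+1}^∞ t_{ij}(x)·f_{XY}(x,y) + Σ_{x=u+c_i+1}^∞ f_X(x), and moreover ψ_i(u,1) = Σ_{x=u+c_i+1}^∞ f_X(x) + (1−q)·Σ_{y=1}^∞ ξ_y(u+c_i). -/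
import Mathlib


open scoped BigOperators

set_option maxHeartbeats 1000000

noncomputable section

namespace DelayedClaims

/-- Marginal pmf of the main claim: `f_X(x) = Σ_y f_{XY}(x,y)`. -/
def fX (f : ℕ → ℕ → ℝ) (x : ℕ) : ℝ := ∑' y : ℕ, f x y

/-- `ξ_y(m) = Σ_{x=1}^m f_{XY}(x, y + m - x)`. -/
def xi (f : ℕ → ℕ → ℝ) (y m : ℕ) : ℝ := ∑ x ∈ Finset.Icc 1 m, f x (y + m - x)

/-- Probability weight of a single period outcome `(x, y, d)`:
`d = true` means the settlement of the by-claim `y` is delayed (probability `q`). -/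
def w (f : ℕ → ℕ → ℝ) (q : ℝ) (p : ℕ × ℕ × Bool) : ℝ :=
  f p.1 p.2.1 * (if p.2.2 then q else 1 - q)

/-- Probability weight of an `n`-period path of i.i.d. period outcomes. -/
def pathWeight (f : ℕ → ℕ → ℝ) (q : ℝ) (n : ℕ) (ω : Fin n → ℕ × ℕ × Bool) : ℝ :=
  ∏ s : Fin n, w f q (ω s)

/-- Ruin indicator along a path.  Here `c` lists the premium levels,
`T i s` is the premium level following level `i` when the period adjustment
statistic equals `s`, `stat x y d carry` is the period adjustment statistic,
`i` is the current premium level, `u` the current surplus, and `carry` the amount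
of the by-claim whose settlement was delayed from the previous period (`0` if none).
In each period the premium `c i` is received up front and the settled amount
`x + (1-d)·y + carry` is paid at the end of the period; ruin occurs as soon as
the surplus becomes negative at the end of some period. -/
def ruined (l : ℕ) (c : Fin l → ℕ) (T : Fin l → ℕ → Fin l)
    (stat : ℕ → ℕ → Bool → ℕ → ℕ) :
    (n : ℕ) → (Fin n → ℕ × ℕ × Bool) → Fin l → ℤ → ℕ → Bool
  | 0, _, _, _, _ => false
  | n + 1, ω, i, u, carry =>
    let x : ℕ := (ω 0).1
    let y : ℕ := (ω 0).2.1
    let d : Bool := (ω 0).2.2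
    let u' : ℤ := u + (c i : ℤ) - ((x : ℤ) + (if d then 0 else (y : ℤ)) + (carry : ℤ))
    if u' < 0 then true
    else ruined l c T stat n (fun s => ω s.succ) (T i (stat x y d carry)) u'
      (if d then y else 0)

/-- `ψ'_i(u; z, n)`: the finite-time ruin probability over horizon `n` of the model with
an up-front delayed by-claim `z` settled at the end of period 1 (taking `z = 0` gives the
model without an up-front delayed by-claim), with initial premium level `i` and
initial surplus `u`.  By convention it equals `1` for `u < 0` and `0` for `n = 0`. -/
def psiAux (l : ℕ) (c : Fin l → ℕ) (T : Fin l → ℕ → Fin l)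
    (stat : ℕ → ℕ → Bool → ℕ → ℕ) (f : ℕ → ℕ → ℝ) (q : ℝ)
    (i : Fin l) (u : ℤ) (z : ℕ) (n : ℕ) : ℝ :=
  if u < 0 then 1
  else ∑' ω : Fin n → ℕ × ℕ × Bool,
    pathWeight f q n ω * (if ruined l c T stat n ω i u z then 1 else 0)

/-- `ψ_i(u, n)`: finite-time ruin probability without an up-front delayed by-claim. -/
def psi (l : ℕ) (c : Fin l → ℕ) (T : Fin l → ℕ → Fin l)
    (stat : ℕ → ℕ → Bool → ℕ → ℕ) (f : ℕ → ℕ → ℝ) (q : ℝ)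
    (i : Fin l) (u : ℤ) (n : ℕ) : ℝ :=
  psiAux l c T stat f q i u 0 n

/-- Adjustment statistic: aggregate reported claims `X + Y`. -/
def statRep (x y : ℕ) (_ : Bool) (_ : ℕ) : ℕ := x + y

/-- Adjustment statistic: aggregate settled claims `X + (1-D)·Y + carry`. -/
def statSet (x y : ℕ) (d : Bool) (carry : ℕ) : ℕ := x + (if d then 0 else y) + carry

/-- Adjustment statistic: reported number of claims `1{X>0} + 1{Y>0}`. -/
def statRepN (x y : ℕ) (_ : Bool) (_ : ℕ) : ℕ :=
  (if 0 < x then 1 else 0) + (if 0 < y then 1 else 0)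

/-- Adjustment statistic: settled number of claims
`1{X>0} + 1{Y>0 and not delayed} + 1{delayed by-claim from the previous period}`. -/
def statSetN (x y : ℕ) (d : Bool) (carry : ℕ) : ℕ :=
  (if 0 < x then 1 else 0) + (if 0 < y ∧ d = false then 1 else 0) +
    (if 0 < carry then 1 else 0)

/-! ### Auxiliary lemmas -/

section Aux

variable {f : ℕ → ℕ → ℝ} {q : ℝ}

lemma summable_f (hfsum : ∑' p : ℕ × ℕ, f p.1 p.2 = 1) :
    Summable (fun p : ℕ × ℕ => f p.1 p.2) := by
  by_contra h
  rw [tsum_eq_zero_of_not_summable h] at hfsum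
  norm_num at hfsum

lemma w_nonneg (hfnn : ∀ x y, 0 ≤ f x y) (hq0 : 0 ≤ q) (hq1 : q ≤ 1)
    (p : ℕ × ℕ × Bool) : 0 ≤ w f q p :=
  mul_nonneg (hfnn _ _) (by split <;> linarith)

lemma summable_w (hfnn : ∀ x y, 0 ≤ f x y) (hfsum : ∑' p : ℕ × ℕ, f p.1 p.2 = 1)
    (hq0 : 0 ≤ q) (hq1 : q ≤ 1) : Summable (w f q) := by
  have hg : Summable (fun b : Bool => if b then q else 1 - q) := Summable.of_finite
  have h2 : Summable (fun z : (ℕ × ℕ) × Bool => f z.1.1 z.1.2 * (if z.2 then q else 1 - q)) :=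
    Summable.mul_of_nonneg (summable_f hfsum) hg
      (fun p => hfnn _ _) (fun b => by dsimp; split <;> linarith)
  exact ((Equiv.prodAssoc ℕ ℕ Bool).summable_iff (f := w f q)).mp h2

lemma tsum_w (hfnn : ∀ x y, 0 ≤ f x y) (hfsum : ∑' p : ℕ × ℕ, f p.1 p.2 = 1)
    (hq0 : 0 ≤ q) (hq1 : q ≤ 1) : ∑' p : ℕ × ℕ × Bool, w f q p = 1 := by
  rw [← (Equiv.prodAssoc ℕ ℕ Bool).tsum_eq (w f q)]
  have h2 : Summable (fun z : (ℕ × ℕ) × Bool => w f q (Equiv.prodAssoc ℕ ℕ Bool z)) :=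
    ((Equiv.prodAssoc ℕ ℕ Bool).summable_iff (f := w f q)).mpr (summable_w hfnn hfsum hq0 hq1)
  have h1 : ∑' (z : (ℕ × ℕ) × Bool), w f q ((Equiv.prodAssoc ℕ ℕ Bool) z)
      = ∑' (xy : ℕ × ℕ), ∑' (b : Bool), w f q ((Equiv.prodAssoc ℕ ℕ Bool) (xy, b)) :=
    Summable.tsum_prod' h2 (fun xy => Summable.of_finite)
  rw [h1]
  have : ∀ xy : ℕ × ℕ, ∑' b : Bool, w f q (Equiv.prodAssoc ℕ ℕ Bool (xy, b)) = f xy.1 xy.2 := by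
    intro xy
    rw [tsum_bool]
    simp [w, Equiv.prodAssoc]
    ring
  rw [tsum_congr this, hfsum]

lemma pathWeight_nonneg (hfnn : ∀ x y, 0 ≤ f x y) (hq0 : 0 ≤ q) (hq1 : q ≤ 1)
    (n : ℕ) (ω : Fin n → ℕ × ℕ × Bool) : 0 ≤ pathWeight f q n ω :=
  Finset.prod_nonneg fun s _ => w_nonneg hfnn hq0 hq1 _

lemma pathWeight_cons (n : ℕ) (a : ℕ × ℕ × Bool) (ω : Fin n → ℕ × ℕ × Bool) :
    pathWeight f q (n + 1) (Fin.cons a ω) = w f q a * pathWeight f q n ω := by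
  simp [pathWeight, Fin.prod_univ_succ]

lemma summable_pathWeight (hfnn : ∀ x y, 0 ≤ f x y) (hfsum : ∑' p : ℕ × ℕ, f p.1 p.2 = 1)
    (hq0 : 0 ≤ q) (hq1 : q ≤ 1) : ∀ n, Summable (pathWeight f q n)
  | 0 => Summable.of_finite
  | (n + 1) => by
    have ih := summable_pathWeight hfnn hfsum hq0 hq1 n
    have h2 : Summable (fun z : (ℕ × ℕ × Bool) × (Fin n → ℕ × ℕ × Bool) =>
        w f q z.1 * pathWeight f q n z.2) :=
      Summable.mul_of_nonneg (summable_w hfnn hfsum hq0 hq1) ih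
        (fun p => w_nonneg hfnn hq0 hq1 p) (fun ω => pathWeight_nonneg hfnn hq0 hq1 n ω)
    have h3 : Summable (fun z : (ℕ × ℕ × Bool) × (Fin n → ℕ × ℕ × Bool) =>
        pathWeight f q (n+1) (Fin.consEquiv (fun _ => ℕ × ℕ × Bool) z)) := by
      refine h2.congr fun z => ?_
      rw [show (Fin.consEquiv (fun _ => ℕ × ℕ × Bool) z : Fin (n+1) → ℕ × ℕ × Bool)
          = Fin.cons z.1 z.2 from rfl, pathWeight_cons]
    exact ((Fin.consEquiv (fun _ => ℕ × ℕ × Bool)).summable_iff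
      (f := pathWeight f q (n+1))).mp h3

lemma tsum_pathWeight (hfnn : ∀ x y, 0 ≤ f x y) (hfsum : ∑' p : ℕ × ℕ, f p.1 p.2 = 1)
    (hq0 : 0 ≤ q) (hq1 : q ≤ 1) :
    ∀ n, ∑' ω : Fin n → ℕ × ℕ × Bool, pathWeight f q n ω = 1
  | 0 => by
    rw [tsum_eq_single (default : Fin 0 → ℕ × ℕ × Bool)
      (fun ω h => absurd (Subsingleton.elim ω default) h)]
    simp [pathWeight]
  | (n + 1) => by
    have ih := tsum_pathWeight hfnn hfsum hq0 hq1 n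
    rw [← (Fin.consEquiv (fun _ => ℕ × ℕ × Bool)).tsum_eq (pathWeight f q (n+1))]
    have h3 : Summable (fun z : (ℕ × ℕ × Bool) × (Fin n → ℕ × ℕ × Bool) =>
        pathWeight f q (n+1) (Fin.consEquiv (fun _ => ℕ × ℕ × Bool) z)) :=
      ((Fin.consEquiv (fun _ => ℕ × ℕ × Bool)).summable_iff (f := pathWeight f q (n+1))).mpr
        (summable_pathWeight hfnn hfsum hq0 hq1 (n+1))
    rw [Summable.tsum_prod' h3 (fun a => by
      refine ((summable_pathWeight hfnn hfsum hq0 hq1 n).mul_left (w f q a)).congr fun ω => ?_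
      rw [show (Fin.consEquiv (fun _ => ℕ × ℕ × Bool) (a, ω) : Fin (n+1) → ℕ × ℕ × Bool)
          = Fin.cons a ω from rfl, pathWeight_cons])]
    calc ∑' a, ∑' ω : Fin n → ℕ × ℕ × Bool,
          pathWeight f q (n+1) (Fin.consEquiv (fun _ => ℕ × ℕ × Bool) (a, ω))
        = ∑' a, ∑' ω : Fin n → ℕ × ℕ × Bool, w f q a * pathWeight f q n ω := by
          refine tsum_congr fun a => tsum_congr fun ω => ?_
          rw [show (Fin.consEquiv (fun _ => ℕ × ℕ × Bool) (a, ω) : Fin (n+1) → ℕ × ℕ × Bool)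
              = Fin.cons a ω from rfl, pathWeight_cons]
      _ = ∑' a, w f q a * ∑' ω : Fin n → ℕ × ℕ × Bool, pathWeight f q n ω := by
          refine tsum_congr fun a => ?_; rw [tsum_mul_left]
      _ = 1 := by rw [ih]; simp [tsum_w hfnn hfsum hq0 hq1]

section
variable (hfnn : ∀ x y, 0 ≤ f x y) (hfsum : ∑' p : ℕ × ℕ, f p.1 p.2 = 1)
    (hq0 : 0 ≤ q) (hq1 : q ≤ 1)
include hfnn hfsum hq0 hq1

lemma summable_pw_mul (n : ℕ) (G : (Fin n → ℕ × ℕ × Bool) → ℝ)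
    (hG0 : ∀ ω, 0 ≤ G ω) (hG1 : ∀ ω, G ω ≤ 1) :
    Summable (fun ω : Fin n → ℕ × ℕ × Bool => pathWeight f q n ω * G ω) :=
  Summable.of_nonneg_of_le (fun ω => mul_nonneg (pathWeight_nonneg hfnn hq0 hq1 n ω) (hG0 ω))
    (fun ω => mul_le_of_le_one_right (pathWeight_nonneg hfnn hq0 hq1 n ω) (hG1 ω))
    (summable_pathWeight hfnn hfsum hq0 hq1 n)

lemma tsum_step (n : ℕ) (G : (Fin (n+1) → ℕ × ℕ × Bool) → ℝ)
    (hG0 : ∀ ω, 0 ≤ G ω) (hG1 : ∀ ω, G ω ≤ 1) :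
    ∑' ω : Fin (n+1) → ℕ × ℕ × Bool, pathWeight f q (n+1) ω * G ω
    = ∑' a : ℕ × ℕ × Bool, w f q a *
        ∑' τ : Fin n → ℕ × ℕ × Bool, pathWeight f q n τ * G (Fin.cons a τ) := by
  rw [← (Fin.consEquiv (fun _ => ℕ × ℕ × Bool)).tsum_eq
    (fun ω => pathWeight f q (n+1) ω * G ω)]
  have hsum : Summable (fun z : (ℕ × ℕ × Bool) × (Fin n → ℕ × ℕ × Bool) =>
      pathWeight f q (n+1) (Fin.consEquiv (fun _ => ℕ × ℕ × Bool) z)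
        * G (Fin.consEquiv (fun _ => ℕ × ℕ × Bool) z)) :=
    ((Fin.consEquiv (fun _ => ℕ × ℕ × Bool)).summable_iff
      (f := fun ω => pathWeight f q (n+1) ω * G ω)).mpr
      (summable_pw_mul hfnn hfsum hq0 hq1 (n+1) G hG0 hG1)
  rw [Summable.tsum_prod' hsum (fun a => by
    have : Summable (fun τ : Fin n → ℕ × ℕ × Bool =>
        w f q a * (pathWeight f q n τ * G (Fin.cons a τ))) :=
      ((summable_pw_mul hfnn hfsum hq0 hq1 n (fun τ => G (Fin.cons a τ))
        (fun τ => hG0 _) (fun τ => hG1 _)).mul_left (w f q a))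
    refine this.congr fun τ => ?_
    rw [show (Fin.consEquiv (fun _ => ℕ × ℕ × Bool) (a, τ) : Fin (n+1) → ℕ × ℕ × Bool)
        = Fin.cons a τ from rfl, pathWeight_cons]; ring)]
  refine tsum_congr fun a => ?_
  rw [← tsum_mul_left]
  refine tsum_congr fun τ => ?_
  rw [show (Fin.consEquiv (fun _ => ℕ × ℕ × Bool) (a, τ) : Fin (n+1) → ℕ × ℕ × Bool)
      = Fin.cons a τ from rfl, pathWeight_cons]; ring

variable {l : ℕ} {c : Fin l → ℕ} {T : Fin l → ℕ → Fin l} {stat : ℕ → ℕ → Bool → ℕ → ℕ}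

lemma psiAux_nonneg (i : Fin l) (u : ℤ) (z n : ℕ) :
    0 ≤ psiAux l c T stat f q i u z n := by
  unfold psiAux; split
  · norm_num
  · exact tsum_nonneg fun ω => mul_nonneg (pathWeight_nonneg hfnn hq0 hq1 n ω)
      (by split <;> norm_num)

lemma psiAux_le_one (i : Fin l) (u : ℤ) (z n : ℕ) :
    psiAux l c T stat f q i u z n ≤ 1 := by
  unfold psiAux; split
  · exact le_rfl
  · calc (∑' ω : Fin n → ℕ × ℕ × Bool, pathWeight f q n ω *
          (if ruined l c T stat n ω i u z then 1 else 0))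
        ≤ ∑' ω : Fin n → ℕ × ℕ × Bool, pathWeight f q n ω := by
          refine Summable.tsum_le_tsum (fun ω => ?_)
            (summable_pw_mul hfnn hfsum hq0 hq1 n _ (fun ω => by split <;> norm_num)
              (fun ω => by split <;> norm_num))
            (summable_pathWeight hfnn hfsum hq0 hq1 n)
          exact mul_le_of_le_one_right (pathWeight_nonneg hfnn hq0 hq1 n ω)
            (by split <;> norm_num)
      _ = 1 := tsum_pathWeight hfnn hfsum hq0 hq1 n

lemma psiAux_zero (i : Fin l) (u : ℤ) (hu : 0 ≤ u) (z : ℕ) :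
    psiAux l c T stat f q i u z 0 = 0 := by
  rw [psiAux, if_neg (not_lt.2 hu)]
  have : ∀ ω : Fin 0 → ℕ × ℕ × Bool,
      pathWeight f q 0 ω * (if ruined l c T stat 0 ω i u z then 1 else 0) = 0 := by
    intro ω; simp [ruined]
  rw [tsum_congr this, tsum_zero]

lemma psiAux_succ (i : Fin l) (u : ℤ) (hu : 0 ≤ u) (z n : ℕ) :
    psiAux l c T stat f q i u z (n + 1) =
      ∑' a : ℕ × ℕ × Bool, w f q a *
        (if u + (c i : ℤ) - ((a.1 : ℤ) + (if a.2.2 then 0 else (a.2.1 : ℤ)) + (z : ℤ)) < 0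
         then 1
         else psiAux l c T stat f q (T i (stat a.1 a.2.1 a.2.2 z))
           (u + (c i : ℤ) - ((a.1 : ℤ) + (if a.2.2 then 0 else (a.2.1 : ℤ)) + (z : ℤ)))
           (if a.2.2 then a.2.1 else 0) n) := by
  rw [psiAux, if_neg (not_lt.2 hu)]
  rw [tsum_step hfnn hfsum hq0 hq1 n _ (fun ω => by split <;> norm_num)
    (fun ω => by split <;> norm_num)]
  refine tsum_congr fun a => ?_
  congr 1
  have hr : ∀ τ : Fin n → ℕ × ℕ × Bool,
      ruined l c T stat (n+1) (Fin.cons a τ) i u z =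
      (if u + (c i : ℤ) - ((a.1 : ℤ) + (if a.2.2 then 0 else (a.2.1 : ℤ)) + (z : ℤ)) < 0
       then true
       else ruined l c T stat n τ (T i (stat a.1 a.2.1 a.2.2 z))
         (u + (c i : ℤ) - ((a.1 : ℤ) + (if a.2.2 then 0 else (a.2.1 : ℤ)) + (z : ℤ)))
         (if a.2.2 then a.2.1 else 0)) := by
    intro τ
    show (if _ then true else _) = _
    simp only [Fin.cons_zero, Fin.cons_succ]
  by_cases hcase : u + (c i : ℤ) - ((a.1 : ℤ) + (if a.2.2 then 0 else (a.2.1 : ℤ)) + (z : ℤ)) < 0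
  · rw [if_pos hcase]
    calc ∑' τ : Fin n → ℕ × ℕ × Bool, pathWeight f q n τ *
          (if ruined l c T stat (n+1) (Fin.cons a τ) i u z then 1 else 0)
        = ∑' τ : Fin n → ℕ × ℕ × Bool, pathWeight f q n τ := by
          refine tsum_congr fun τ => ?_
          rw [hr τ, if_pos hcase]; simp
      _ = 1 := tsum_pathWeight hfnn hfsum hq0 hq1 n
  · rw [if_neg hcase, psiAux, if_neg (not_lt.2 (le_of_not_gt hcase))]
    refine tsum_congr fun τ => ?_
    rw [hr τ, if_neg hcase]

lemma psiAux_big (j : Fin l) (v : ℤ) (hv : 0 ≤ v) (z n : ℕ) (hn : 1 ≤ n)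
    (hz : v + (c j : ℤ) < z) : psiAux l c T stat f q j v z n = 1 := by
  obtain ⟨n', rfl⟩ : ∃ n', n = n' + 1 := ⟨n - 1, by omega⟩
  rw [psiAux_succ hfnn hfsum hq0 hq1 j v hv z n']
  have hall : ∀ a : ℕ × ℕ × Bool, w f q a *
      (if v + (c j : ℤ) - ((a.1 : ℤ) + (if a.2.2 then 0 else (a.2.1 : ℤ)) + (z : ℤ)) < 0
       then 1
       else psiAux l c T stat f q (T j (stat a.1 a.2.1 a.2.2 z))
         (v + (c j : ℤ) - ((a.1 : ℤ) + (if a.2.2 then 0 else (a.2.1 : ℤ)) + (z : ℤ)))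
         (if a.2.2 then a.2.1 else 0) n') = w f q a := by
    intro a
    rw [if_pos, mul_one]
    have h1 : (0 : ℤ) ≤ (a.1 : ℤ) := Int.natCast_nonneg _
    have h2 : (0 : ℤ) ≤ (if a.2.2 then 0 else (a.2.1 : ℤ)) := by
      split
      · exact le_rfl
      · exact Int.natCast_nonneg _
    linarith
  rw [tsum_congr hall]
  exact tsum_w hfnn hfsum hq0 hq1

lemma summable_w_mul (s : ℕ × ℕ × Bool → ℝ) (h0 : ∀ a, 0 ≤ s a) (h1 : ∀ a, s a ≤ 1) :
    Summable (fun a => w f q a * s a) :=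
  Summable.of_nonneg_of_le (fun a => mul_nonneg (w_nonneg hfnn hq0 hq1 a) (h0 a))
    (fun a => mul_le_of_le_one_right (w_nonneg hfnn hq0 hq1 a) (h1 a))
    (summable_w hfnn hfsum hq0 hq1)

end

lemma tsum_triple (F : ℕ × ℕ × Bool → ℝ) (hs : Summable F) :
    ∑' a : ℕ × ℕ × Bool, F a
      = ∑' xy : ℕ × ℕ, (F (xy.1, xy.2, false) + F (xy.1, xy.2, true)) := by
  rw [← (Equiv.prodAssoc ℕ ℕ Bool).tsum_eq F]
  have h1 : ∑' (z : (ℕ × ℕ) × Bool), F ((Equiv.prodAssoc ℕ ℕ Bool) z)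
      = ∑' (xy : ℕ × ℕ), ∑' (b : Bool), F ((Equiv.prodAssoc ℕ ℕ Bool) (xy, b)) :=
    Summable.tsum_prod' (((Equiv.prodAssoc ℕ ℕ Bool).summable_iff (f := F)).mpr hs)
      (fun xy => Summable.of_finite)
  rw [h1]
  exact tsum_congr fun xy => tsum_bool _

lemma tsum_shift (g : ℕ → ℝ) (c : ℕ) (h : ∀ y, y < c → g y = 0) :
    ∑' y, g y = ∑' k : ℕ, g (c + k) := by
  refine (Function.Injective.tsum_eq (add_right_injective c) ?_).symm
  intro x hx
  rcases lt_or_ge x c with hlt | hge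
  · exact absurd (h x hlt) hx
  · exact ⟨x - c, by show c + (x - c) = x; omega⟩

section Regions
variable (hfs : Summable (fun p : ℕ × ℕ => f p.1 p.2)) (hfnn : ∀ x y, 0 ≤ f x y)
include hfs hfnn

lemma summable_region (P : ℕ × ℕ → Prop) [DecidablePred P] (g : ℕ × ℕ → ℝ)
    (hg0 : ∀ p, 0 ≤ g p) (hg1 : ∀ p, g p ≤ f p.1 p.2) :
    Summable (fun xy : ℕ × ℕ => if P xy then g xy else 0) := by
  refine Summable.of_nonneg_of_le (fun p => ?_) (fun p => ?_) hfs
  · split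
    · exact hg0 p
    · exact le_rfl
  · split
    · exact hg1 p
    · exact hfnn _ _

lemma tsum_region (P : ℕ × ℕ → Prop) [DecidablePred P] (g : ℕ × ℕ → ℝ)
    (hg0 : ∀ p, 0 ≤ g p) (hg1 : ∀ p, g p ≤ f p.1 p.2) :
    ∑' xy : ℕ × ℕ, (if P xy then g xy else 0)
      = ∑' x : ℕ, ∑' y : ℕ, (if P (x, y) then g (x, y) else 0) := by
  refine Summable.tsum_prod' (summable_region hfs hfnn P g hg0 hg1) fun x => ?_
  refine Summable.of_nonneg_of_le (fun y => ?_) (fun y => ?_) (hfs.prod_factor x)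
  · split
    · exact hg0 _
    · exact le_rfl
  · split
    · exact hg1 (x, y)
    · exact hfnn _ _

/-- Region `{y = 0, x ≤ m}` with weight `f x y * g x`. -/
lemma tsum_T1 (m : ℕ) (g : ℕ → ℝ) :
    ∑' xy : ℕ × ℕ, (if xy.2 = 0 ∧ xy.1 ≤ m then f xy.1 xy.2 * g xy.1 else 0)
      = ∑ x ∈ Finset.range (m + 1), f x 0 * g x := by
  rw [tsum_eq_sum (s := Finset.range (m + 1) ×ˢ {0}) ?_]
  · rw [Finset.sum_product]
    refine Finset.sum_congr rfl fun x hx => ?_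
    rw [Finset.sum_singleton, if_pos ⟨rfl, Nat.lt_succ_iff.mp (Finset.mem_range.mp hx)⟩]
  · intro p hp
    rw [Finset.mem_product, Finset.mem_range, Finset.mem_singleton] at hp
    push_neg at hp
    rw [if_neg]
    rintro ⟨h1, h2⟩
    rcases Nat.lt_or_ge p.1 (m + 1) with h | h
    · exact hp h h1
    · omega

omit hfs hfnn in
/-- Region `{1 ≤ x, 1 ≤ y, x + y ≤ m}` with weight `f x y * g x y`. -/
lemma tsum_T3 (m : ℕ) (g : ℕ → ℕ → ℝ) :
    ∑' xy : ℕ × ℕ, (if 1 ≤ xy.1 ∧ 1 ≤ xy.2 ∧ xy.1 + xy.2 ≤ m then f xy.1 xy.2 * g xy.1 xy.2 else 0)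
      = ∑ x ∈ Finset.Icc 1 (m - 1), ∑ y ∈ Finset.Icc 1 (m - x), f x y * g x y := by
  rw [tsum_eq_sum (s := Finset.Icc 1 (m - 1) ×ˢ Finset.Icc 1 (m - 1)) ?_]
  · rw [Finset.sum_product]
    refine Finset.sum_congr rfl fun x hx => ?_
    rw [Finset.mem_Icc] at hx
    rw [← Finset.sum_subset (s₁ := Finset.Icc 1 (m - x)) (by
      intro y hy; rw [Finset.mem_Icc] at *; omega)]
    · refine Finset.sum_congr rfl fun y hy => ?_
      rw [Finset.mem_Icc] at hy
      rw [if_pos ⟨hx.1, hy.1, by omega⟩]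
    · intro y hy hy2
      rw [Finset.mem_Icc] at *
      rw [if_neg]; omega
  · intro p hp
    rw [Finset.mem_product, Finset.mem_Icc, Finset.mem_Icc] at hp
    rw [if_neg]; rintro ⟨h1, h2, h3⟩; omega

/-- Region `{1 ≤ x ≤ m, 1 ≤ y ≤ b x}` with weight `f x y * g x y`. -/
lemma tsum_T4 (m : ℕ) (b : ℕ → ℕ) (g : ℕ → ℕ → ℝ)
    (hg0 : ∀ x y, 0 ≤ g x y) (hg1 : ∀ x y, g x y ≤ 1) :
    ∑' xy : ℕ × ℕ,
        (if 1 ≤ xy.1 ∧ xy.1 ≤ m ∧ 1 ≤ xy.2 ∧ xy.2 ≤ b xy.1 then f xy.1 xy.2 * g xy.1 xy.2 else 0)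
      = ∑ x ∈ Finset.Icc 1 m, ∑ y ∈ Finset.Icc 1 (b x), f x y * g x y := by
  rw [tsum_region hfs hfnn _ (fun xy => f xy.1 xy.2 * g xy.1 xy.2)
    (fun p => mul_nonneg (hfnn _ _) (hg0 _ _))
    (fun p => mul_le_of_le_one_right (hfnn _ _) (hg1 _ _))]
  rw [tsum_eq_sum (s := Finset.Icc 1 m) (fun x hx => by
    rw [Finset.mem_Icc] at hx
    have : ∀ y : ℕ, (if 1 ≤ x ∧ x ≤ m ∧ 1 ≤ y ∧ y ≤ b x then f x y * g x y else 0) = 0 := by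
      intro y; rw [if_neg]; rintro ⟨h1, h2, _⟩; exact hx ⟨h1, h2⟩
    rw [tsum_congr this, tsum_zero])]
  refine Finset.sum_congr rfl fun x hx => ?_
  rw [Finset.mem_Icc] at hx
  rw [tsum_eq_sum (s := Finset.Icc 1 (b x)) (fun y hy => by
    rw [Finset.mem_Icc] at hy
    rw [if_neg]; rintro ⟨h1, h2, h3, h4⟩; exact hy ⟨h3, h4⟩)]
  refine Finset.sum_congr rfl fun y hy => ?_
  rw [Finset.mem_Icc] at hy
  rw [if_pos ⟨hx.1, hx.2, hy.1, hy.2⟩]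

/-- Region `{1 ≤ x ≤ m, x + y > m}`: tail sums give `ξ`. -/
lemma tsum_T2 (m : ℕ) :
    ∑' xy : ℕ × ℕ, (if 1 ≤ xy.1 ∧ xy.1 ≤ m ∧ m < xy.1 + xy.2 then f xy.1 xy.2 else 0)
      = ∑' k : ℕ, xi f (k + 1) m := by
  have hsw : ∀ x ∈ Finset.Icc 1 m, Summable (fun k : ℕ => f x (k + 1 + m - x)) := by
    intro x hx
    rw [Finset.mem_Icc] at hx
    have : (fun k : ℕ => f x (k + 1 + m - x)) = (fun y => f x y) ∘ (fun k => (1 + m - x) + k) := by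
      funext k; simp only [Function.comp_apply]; congr 1; omega
    rw [this]
    exact Summable.comp_injective (hfs.prod_factor x) (add_right_injective _)
  calc ∑' xy : ℕ × ℕ, (if 1 ≤ xy.1 ∧ xy.1 ≤ m ∧ m < xy.1 + xy.2 then f xy.1 xy.2 else 0)
      = ∑' x, ∑' y, (if 1 ≤ x ∧ x ≤ m ∧ m < x + y then f x y else 0) :=
        tsum_region hfs hfnn _ (fun xy => f xy.1 xy.2) (fun p => hfnn _ _) (fun p => le_rfl)
    _ = ∑ x ∈ Finset.Icc 1 m, ∑' y, (if 1 ≤ x ∧ x ≤ m ∧ m < x + y then f x y else 0) := by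
        refine tsum_eq_sum (fun x hx => ?_)
        rw [Finset.mem_Icc] at hx
        have : ∀ y : ℕ, (if 1 ≤ x ∧ x ≤ m ∧ m < x + y then f x y else 0) = 0 := by
          intro y; rw [if_neg]; rintro ⟨h1, h2, _⟩; exact hx ⟨h1, h2⟩
        rw [tsum_congr this, tsum_zero]
    _ = ∑ x ∈ Finset.Icc 1 m, ∑' k : ℕ, f x (k + 1 + m - x) := by
        refine Finset.sum_congr rfl fun x hx => ?_
        rw [Finset.mem_Icc] at hx
        calc ∑' y, (if 1 ≤ x ∧ x ≤ m ∧ m < x + y then f x y else 0)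
            = ∑' k : ℕ, (if 1 ≤ x ∧ x ≤ m ∧ m < x + (m - x + 1 + k) then f x (m - x + 1 + k)
                else 0) :=
              tsum_shift _ (m - x + 1) (fun y hy => by rw [if_neg]; rintro ⟨_, _, h3⟩; omega)
          _ = ∑' k : ℕ, f x (k + 1 + m - x) := by
              refine tsum_congr fun k => ?_
              rw [if_pos ⟨hx.1, hx.2, by omega⟩]
              congr 1; omega
    _ = ∑' k : ℕ, xi f (k + 1) m := by
        rw [← Summable.tsum_finsetSum hsw]
        exact tsum_congr fun k => rfl

/-- Region `{1 ≤ x ≤ m, y > b x}`. -/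
lemma tsum_T5 (m : ℕ) (b : ℕ → ℕ) :
    ∑' xy : ℕ × ℕ, (if 1 ≤ xy.1 ∧ xy.1 ≤ m ∧ b xy.1 < xy.2 then f xy.1 xy.2 else 0)
      = ∑ x ∈ Finset.Icc 1 m, ∑' k : ℕ, f x (b x + 1 + k) := by
  calc ∑' xy : ℕ × ℕ, (if 1 ≤ xy.1 ∧ xy.1 ≤ m ∧ b xy.1 < xy.2 then f xy.1 xy.2 else 0)
      = ∑' x, ∑' y, (if 1 ≤ x ∧ x ≤ m ∧ b x < y then f x y else 0) :=
        tsum_region hfs hfnn _ (fun xy => f xy.1 xy.2) (fun p => hfnn _ _) (fun p => le_rfl)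
    _ = ∑ x ∈ Finset.Icc 1 m, ∑' y, (if 1 ≤ x ∧ x ≤ m ∧ b x < y then f x y else 0) := by
        refine tsum_eq_sum (fun x hx => ?_)
        rw [Finset.mem_Icc] at hx
        have : ∀ y : ℕ, (if 1 ≤ x ∧ x ≤ m ∧ b x < y then f x y else 0) = 0 := by
          intro y; rw [if_neg]; rintro ⟨h1, h2, _⟩; exact hx ⟨h1, h2⟩
        rw [tsum_congr this, tsum_zero]
    _ = ∑ x ∈ Finset.Icc 1 m, ∑' k : ℕ, f x (b x + 1 + k) := by
        refine Finset.sum_congr rfl fun x hx => ?_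
        rw [Finset.mem_Icc] at hx
        calc ∑' y, (if 1 ≤ x ∧ x ≤ m ∧ b x < y then f x y else 0)
            = ∑' k : ℕ, (if 1 ≤ x ∧ x ≤ m ∧ b x < b x + 1 + k then f x (b x + 1 + k) else 0) :=
              tsum_shift _ (b x + 1) (fun y hy => by rw [if_neg]; rintro ⟨_, _, h3⟩; omega)
          _ = ∑' k : ℕ, f x (b x + 1 + k) := by
              refine tsum_congr fun k => ?_
              rw [if_pos ⟨hx.1, hx.2, by omega⟩]

/-- Region `{x > m}`. -/
lemma tsum_T6 (m : ℕ) :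
    ∑' xy : ℕ × ℕ, (if m < xy.1 then f xy.1 xy.2 else 0)
      = ∑' k : ℕ, fX f (m + 1 + k) := by
  calc ∑' xy : ℕ × ℕ, (if m < xy.1 then f xy.1 xy.2 else 0)
      = ∑' x, ∑' y, (if m < x then f x y else 0) :=
        tsum_region hfs hfnn _ (fun xy => f xy.1 xy.2) (fun p => hfnn _ _) (fun p => le_rfl)
    _ = ∑' x, (if m < x then fX f x else 0) := by
        refine tsum_congr fun x => ?_
        split
        · rfl
        · exact tsum_zero
    _ = ∑' k : ℕ, fX f (m + 1 + k) := by
        calc ∑' x, (if m < x then fX f x else 0)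
            = ∑' k : ℕ, (if m < m + 1 + k then fX f (m + 1 + k) else 0) :=
              tsum_shift _ (m + 1) (fun y hy => by rw [if_neg]; omega)
          _ = ∑' k : ℕ, fX f (m + 1 + k) := by
              refine tsum_congr fun k => ?_
              rw [if_pos (by omega)]

end Regions

end Aux


/-- Theorem 2: recursion for ψ when premiums are adjusted according to
aggregate settled claims. -/
theorem theorem2_settled_aggregate
    (l : ℕ) (c : Fin l → ℕ) (hcpos : ∀ i, 0 < c i) (hcmono : StrictMono c)
    (f : ℕ → ℕ → ℝ) (hfnn : ∀ x y, 0 ≤ f x y)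
    (hfsum : ∑' p : ℕ × ℕ, f p.1 p.2 = 1)
    (hfdeg : ∀ y : ℕ, 0 < y → f 0 y = 0)
    (q : ℝ) (hq0 : 0 ≤ q) (hq1 : q ≤ 1)
    (t : Fin l → Fin l → ℕ → ℝ) (T : Fin l → ℕ → Fin l)
    (hT : ∀ i j s, t i j s = if j = T i s then (1 : ℝ) else 0)
    (u : ℕ) (i : Fin l) (n : ℕ) (hn : 1 ≤ n) :
    psi l c T statSet f q i (u : ℤ) (n + 1) =
        (∑ j : Fin l, ∑ x ∈ Finset.range (u + c i + 1),
          t i j x * psi l c T statSet f q j ((u + c i - x : ℕ) : ℤ) n * f x 0)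
      + (1 - q) * (∑' k : ℕ, xi f (k + 1) (u + c i))
      + (1 - q) * (∑ j : Fin l, ∑ x ∈ Finset.Icc 1 (u + c i - 1), ∑ y ∈ Finset.Icc 1 (u + c i - x),
          t i j (x + y) * psi l c T statSet f q j ((u + c i - x - y : ℕ) : ℤ) n * f x y)
      + q * (∑ j : Fin l, ∑ x ∈ Finset.Icc 1 (u + c i), ∑ y ∈ Finset.Icc 1 (u + c i - x + c j),
          t i j x * psiAux l c T statSet f q j ((u + c i - x : ℕ) : ℤ) y n * f x y)
      + q * (∑ j : Fin l, ∑ x ∈ Finset.Icc 1 (u + c i), ∑' k : ℕ,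
          t i j x * f x (u + c i - x + c j + 1 + k))
      + (∑' k : ℕ, fX f (u + c i + 1 + k)) ∧
    psi l c T statSet f q i (u : ℤ) 1 =
      (∑' k : ℕ, fX f (u + c i + 1 + k))
      + (1 - q) * (∑' k : ℕ, xi f (k + 1) (u + c i)) := by
  have hfs : Summable (fun p : ℕ × ℕ => f p.1 p.2) := summable_f hfsum
  have hci : 0 < c i := hcpos i
  -- pointwise decomposition for horizon n ≥ 1
  have hpt : ∀ x y : ℕ,
      f x y * (1 - q) * (if (u : ℤ) + (c i : ℤ) - ((x : ℤ) + (y : ℤ) + ((0:ℕ) : ℤ)) < 0 then 1 else psiAux l c T statSet f q (T i (x + y)) ((u : ℤ) + (c i : ℤ) - ((x : ℤ) + (y : ℤ) + ((0:ℕ) : ℤ))) 0 n)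
      + f x y * q * (if (u : ℤ) + (c i : ℤ) - ((x : ℤ) + (0 : ℤ) + ((0:ℕ) : ℤ)) < 0 then 1 else psiAux l c T statSet f q (T i x) ((u : ℤ) + (c i : ℤ) - ((x : ℤ) + (0 : ℤ) + ((0:ℕ) : ℤ))) y n)
      = (if y = 0 ∧ x ≤ u + c i then f x y * psiAux l c T statSet f q (T i x) ((u + c i - x : ℕ) : ℤ) 0 n else 0)
      + ((1 - q) * (if 1 ≤ x ∧ x ≤ u + c i ∧ u + c i < x + y then f x y else 0)
      + ((1 - q) * (if 1 ≤ x ∧ 1 ≤ y ∧ x + y ≤ u + c i then f x y * psiAux l c T statSet f q (T i (x + y)) ((u + c i - x - y : ℕ) : ℤ) 0 n else 0)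
      + (q * (if 1 ≤ x ∧ x ≤ u + c i ∧ 1 ≤ y ∧ y ≤ u + c i - x + c (T i x) then f x y * psiAux l c T statSet f q (T i x) ((u + c i - x : ℕ) : ℤ) y n else 0)
      + (q * (if 1 ≤ x ∧ x ≤ u + c i ∧ u + c i - x + c (T i x) < y then f x y else 0)
      + (if u + c i < x then f x y else 0))))) := by
    intro x y
    by_cases h6 : u + c i < x
    · rw [if_pos (show (u : ℤ) + (c i : ℤ) - ((x : ℤ) + (y : ℤ) + ((0:ℕ) : ℤ)) < 0 by omega),
        if_pos (show (u : ℤ) + (c i : ℤ) - ((x : ℤ) + (0 : ℤ) + ((0:ℕ) : ℤ)) < 0 by omega),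
        if_neg (show ¬(y = 0 ∧ x ≤ u + c i) by omega),
        if_neg (show ¬(1 ≤ x ∧ x ≤ u + c i ∧ u + c i < x + y) by omega),
        if_neg (show ¬(1 ≤ x ∧ 1 ≤ y ∧ x + y ≤ u + c i) by omega),
        if_neg (show ¬(1 ≤ x ∧ x ≤ u + c i ∧ 1 ≤ y ∧ y ≤ u + c i - x + c (T i x)) by omega),
        if_neg (show ¬(1 ≤ x ∧ x ≤ u + c i ∧ u + c i - x + c (T i x) < y) by omega),
        if_pos h6]
      ring
    · push_neg at h6
      by_cases hy0 : y = 0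
      · subst hy0
        rw [if_neg (show ¬((u : ℤ) + (c i : ℤ) - ((x : ℤ) + ((0:ℕ) : ℤ) + ((0:ℕ) : ℤ)) < 0) by omega),
          if_neg (show ¬((u : ℤ) + (c i : ℤ) - ((x : ℤ) + (0 : ℤ) + ((0:ℕ) : ℤ)) < 0) by omega),
          if_pos (show (0:ℕ) = 0 ∧ x ≤ u + c i from ⟨rfl, h6⟩),
          if_neg (show ¬(1 ≤ x ∧ x ≤ u + c i ∧ u + c i < x + 0) by omega),
          if_neg (show ¬(1 ≤ x ∧ 1 ≤ 0 ∧ x + 0 ≤ u + c i) by omega),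
          if_neg (show ¬(1 ≤ x ∧ x ≤ u + c i ∧ 1 ≤ 0 ∧ 0 ≤ u + c i - x + c (T i x)) by omega),
          if_neg (show ¬(1 ≤ x ∧ x ≤ u + c i ∧ u + c i - x + c (T i x) < 0) by omega),
          if_neg (show ¬(u + c i < x) by omega),
          show (u : ℤ) + (c i : ℤ) - ((x : ℤ) + ((0:ℕ) : ℤ) + ((0:ℕ) : ℤ)) = ((u + c i - x : ℕ) : ℤ) by omega,
          show (u : ℤ) + (c i : ℤ) - ((x : ℤ) + (0 : ℤ) + ((0:ℕ) : ℤ)) = ((u + c i - x : ℕ) : ℤ) by omega,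
          Nat.add_zero]
        ring
      · by_cases hx0 : x = 0
        · subst hx0
          rw [hfdeg y (by omega)]
          rw [if_neg (show ¬(y = 0 ∧ 0 ≤ u + c i) by omega),
            if_neg (show ¬(1 ≤ 0 ∧ 0 ≤ u + c i ∧ u + c i < 0 + y) by omega),
            if_neg (show ¬(1 ≤ 0 ∧ 1 ≤ y ∧ 0 + y ≤ u + c i) by omega),
            if_neg (show ¬(1 ≤ 0 ∧ 0 ≤ u + c i ∧ 1 ≤ y ∧ y ≤ u + c i - 0 + c (T i 0)) by omega),
            if_neg (show ¬(1 ≤ 0 ∧ 0 ≤ u + c i ∧ u + c i - 0 + c (T i 0) < y) by omega),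
            if_neg (show ¬(u + c i < 0) by omega)]
          ring
        · by_cases hxy : u + c i < x + y
          · rw [if_pos (show (u : ℤ) + (c i : ℤ) - ((x : ℤ) + (y : ℤ) + ((0:ℕ) : ℤ)) < 0 by omega),
              if_neg (show ¬((u : ℤ) + (c i : ℤ) - ((x : ℤ) + (0 : ℤ) + ((0:ℕ) : ℤ)) < 0) by omega),
              show (u : ℤ) + (c i : ℤ) - ((x : ℤ) + (0 : ℤ) + ((0:ℕ) : ℤ)) = ((u + c i - x : ℕ) : ℤ) by omega]
            by_cases hb : y ≤ u + c i - x + c (T i x)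
            · rw [if_neg (show ¬(y = 0 ∧ x ≤ u + c i) by omega),
                if_pos (show 1 ≤ x ∧ x ≤ u + c i ∧ u + c i < x + y by omega),
                if_neg (show ¬(1 ≤ x ∧ 1 ≤ y ∧ x + y ≤ u + c i) by omega),
                if_pos (show 1 ≤ x ∧ x ≤ u + c i ∧ 1 ≤ y ∧ y ≤ u + c i - x + c (T i x) by omega),
                if_neg (show ¬(1 ≤ x ∧ x ≤ u + c i ∧ u + c i - x + c (T i x) < y) by omega),
                if_neg (show ¬(u + c i < x) by omega)]
              ring
            · rw [psiAux_big hfnn hfsum hq0 hq1 (T i x) ((u + c i - x : ℕ) : ℤ)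
                  (Int.natCast_nonneg _) y n hn (by omega),
                if_neg (show ¬(y = 0 ∧ x ≤ u + c i) by omega),
                if_pos (show 1 ≤ x ∧ x ≤ u + c i ∧ u + c i < x + y by omega),
                if_neg (show ¬(1 ≤ x ∧ 1 ≤ y ∧ x + y ≤ u + c i) by omega),
                if_neg (show ¬(1 ≤ x ∧ x ≤ u + c i ∧ 1 ≤ y ∧ y ≤ u + c i - x + c (T i x)) by omega),
                if_pos (show 1 ≤ x ∧ x ≤ u + c i ∧ u + c i - x + c (T i x) < y by omega),
                if_neg (show ¬(u + c i < x) by omega)]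
              ring
          · rw [if_neg (show ¬((u : ℤ) + (c i : ℤ) - ((x : ℤ) + (y : ℤ) + ((0:ℕ) : ℤ)) < 0) by omega),
              if_neg (show ¬((u : ℤ) + (c i : ℤ) - ((x : ℤ) + (0 : ℤ) + ((0:ℕ) : ℤ)) < 0) by omega),
              show (u : ℤ) + (c i : ℤ) - ((x : ℤ) + (y : ℤ) + ((0:ℕ) : ℤ)) = ((u + c i - x - y : ℕ) : ℤ) by omega,
              show (u : ℤ) + (c i : ℤ) - ((x : ℤ) + (0 : ℤ) + ((0:ℕ) : ℤ)) = ((u + c i - x : ℕ) : ℤ) by omega,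
              if_neg (show ¬(y = 0 ∧ x ≤ u + c i) by omega),
              if_neg (show ¬(1 ≤ x ∧ x ≤ u + c i ∧ u + c i < x + y) by omega),
              if_pos (show 1 ≤ x ∧ 1 ≤ y ∧ x + y ≤ u + c i by omega),
              if_pos (show 1 ≤ x ∧ x ≤ u + c i ∧ 1 ≤ y ∧ y ≤ u + c i - x + c (T i x) by omega),
              if_neg (show ¬(1 ≤ x ∧ x ≤ u + c i ∧ u + c i - x + c (T i x) < y) by omega),
              if_neg (show ¬(u + c i < x) by omega)]
            ring
  -- pointwise decomposition for horizon 0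
  have hpt0 : ∀ x y : ℕ,
      f x y * (1 - q) * (if (u : ℤ) + (c i : ℤ) - ((x : ℤ) + (y : ℤ) + ((0:ℕ) : ℤ)) < 0 then 1 else psiAux l c T statSet f q (T i (x + y)) ((u : ℤ) + (c i : ℤ) - ((x : ℤ) + (y : ℤ) + ((0:ℕ) : ℤ))) 0 0)
      + f x y * q * (if (u : ℤ) + (c i : ℤ) - ((x : ℤ) + (0 : ℤ) + ((0:ℕ) : ℤ)) < 0 then 1 else psiAux l c T statSet f q (T i x) ((u : ℤ) + (c i : ℤ) - ((x : ℤ) + (0 : ℤ) + ((0:ℕ) : ℤ))) y 0)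
      = (1 - q) * (if 1 ≤ x ∧ x ≤ u + c i ∧ u + c i < x + y then f x y else 0)
      + (if u + c i < x then f x y else 0) := by
    intro x y
    by_cases h6 : u + c i < x
    · rw [if_pos (show (u : ℤ) + (c i : ℤ) - ((x : ℤ) + (y : ℤ) + ((0:ℕ) : ℤ)) < 0 by omega),
        if_pos (show (u : ℤ) + (c i : ℤ) - ((x : ℤ) + (0 : ℤ) + ((0:ℕ) : ℤ)) < 0 by omega),
        if_neg (show ¬(1 ≤ x ∧ x ≤ u + c i ∧ u + c i < x + y) by omega),
        if_pos h6]
      ring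
    · push_neg at h6
      have cB : ¬((u : ℤ) + (c i : ℤ) - ((x : ℤ) + (0 : ℤ) + ((0:ℕ) : ℤ)) < 0) := by omega
      rw [if_neg cB, psiAux_zero hfnn hfsum hq0 hq1 (T i x) _ (not_lt.mp cB) y,
        if_neg (show ¬(u + c i < x) by omega)]
      by_cases hxy : u + c i < x + y
      · rw [if_pos (show (u : ℤ) + (c i : ℤ) - ((x : ℤ) + (y : ℤ) + ((0:ℕ) : ℤ)) < 0 by omega)]
        by_cases hx0 : x = 0
        · subst hx0
          rw [if_neg (show ¬(1 ≤ 0 ∧ 0 ≤ u + c i ∧ u + c i < 0 + y) by omega),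
            hfdeg y (by omega)]
          ring
        · rw [if_pos (show 1 ≤ x ∧ x ≤ u + c i ∧ u + c i < x + y by omega)]
          ring
      · have cA : ¬((u : ℤ) + (c i : ℤ) - ((x : ℤ) + (y : ℤ) + ((0:ℕ) : ℤ)) < 0) := by omega
        rw [if_neg cA, psiAux_zero hfnn hfsum hq0 hq1 (T i (x + y)) _ (not_lt.mp cA) 0,
          if_neg (show ¬(1 ≤ x ∧ x ≤ u + c i ∧ u + c i < x + y) by omega)]
        ring
  -- summability of the one-step integrand
  have hsum1 : Summable (fun a : ℕ × ℕ × Bool => w f q a * (if (u : ℤ) + (c i : ℤ) - ((a.1 : ℤ) + (if a.2.2 then 0 else (a.2.1 : ℤ)) + ((0:ℕ) : ℤ)) < 0 then 1 else psiAux l c T statSet f q (T i (statSet a.1 a.2.1 a.2.2 0)) ((u : ℤ) + (c i : ℤ) - ((a.1 : ℤ) + (if a.2.2 then 0 else (a.2.1 : ℤ)) + ((0:ℕ) : ℤ))) (if a.2.2 then a.2.1 else 0) n)) :=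
    summable_w_mul hfnn hfsum hq0 hq1 _
      (fun a => by
        split <;> split <;> (first | exact psiAux_nonneg hfnn hfsum hq0 hq1 _ _ _ _ | norm_num))
      (fun a => by
        split <;> split <;> (first | exact psiAux_le_one hfnn hfsum hq0 hq1 _ _ _ _ | norm_num))
  have hsum0 : Summable (fun a : ℕ × ℕ × Bool => w f q a * (if (u : ℤ) + (c i : ℤ) - ((a.1 : ℤ) + (if a.2.2 then 0 else (a.2.1 : ℤ)) + ((0:ℕ) : ℤ)) < 0 then 1 else psiAux l c T statSet f q (T i (statSet a.1 a.2.1 a.2.2 0)) ((u : ℤ) + (c i : ℤ) - ((a.1 : ℤ) + (if a.2.2 then 0 else (a.2.1 : ℤ)) + ((0:ℕ) : ℤ))) (if a.2.2 then a.2.1 else 0) 0)) :=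
    summable_w_mul hfnn hfsum hq0 hq1 _
      (fun a => by
        split <;> split <;> (first | exact psiAux_nonneg hfnn hfsum hq0 hq1 _ _ _ _ | norm_num))
      (fun a => by
        split <;> split <;> (first | exact psiAux_le_one hfnn hfsum hq0 hq1 _ _ _ _ | norm_num))
  -- summability of the six regions
  have SG1 : Summable (fun xy : ℕ × ℕ => (if xy.2 = 0 ∧ xy.1 ≤ u + c i then f xy.1 xy.2 * psiAux l c T statSet f q (T i xy.1) ((u + c i - xy.1 : ℕ) : ℤ) 0 n else 0)) :=
    summable_region hfs hfnn _
      (fun xy => f xy.1 xy.2 * psiAux l c T statSet f q (T i xy.1) ((u + c i - xy.1 : ℕ) : ℤ) 0 n)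
      (fun p => mul_nonneg (hfnn _ _) (psiAux_nonneg hfnn hfsum hq0 hq1 _ _ _ _))
      (fun p => mul_le_of_le_one_right (hfnn _ _) (psiAux_le_one hfnn hfsum hq0 hq1 _ _ _ _))
  have SI2 : Summable (fun xy : ℕ × ℕ => (if 1 ≤ xy.1 ∧ xy.1 ≤ u + c i ∧ u + c i < xy.1 + xy.2 then f xy.1 xy.2 else 0)) :=
    summable_region hfs hfnn _ (fun xy => f xy.1 xy.2) (fun p => hfnn _ _) (fun p => le_rfl)
  have SI3 : Summable (fun xy : ℕ × ℕ => (if 1 ≤ xy.1 ∧ 1 ≤ xy.2 ∧ xy.1 + xy.2 ≤ u + c i then f xy.1 xy.2 * psiAux l c T statSet f q (T i (xy.1 + xy.2)) ((u + c i - xy.1 - xy.2 : ℕ) : ℤ) 0 n else 0)) :=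
    summable_region hfs hfnn _
      (fun xy => f xy.1 xy.2 * psiAux l c T statSet f q (T i (xy.1 + xy.2)) ((u + c i - xy.1 - xy.2 : ℕ) : ℤ) 0 n)
      (fun p => mul_nonneg (hfnn _ _) (psiAux_nonneg hfnn hfsum hq0 hq1 _ _ _ _))
      (fun p => mul_le_of_le_one_right (hfnn _ _) (psiAux_le_one hfnn hfsum hq0 hq1 _ _ _ _))
  have SI4 : Summable (fun xy : ℕ × ℕ => (if 1 ≤ xy.1 ∧ xy.1 ≤ u + c i ∧ 1 ≤ xy.2 ∧ xy.2 ≤ u + c i - xy.1 + c (T i xy.1) then f xy.1 xy.2 * psiAux l c T statSet f q (T i xy.1) ((u + c i - xy.1 : ℕ) : ℤ) xy.2 n else 0)) :=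
    summable_region hfs hfnn _
      (fun xy => f xy.1 xy.2 * psiAux l c T statSet f q (T i xy.1) ((u + c i - xy.1 : ℕ) : ℤ) xy.2 n)
      (fun p => mul_nonneg (hfnn _ _) (psiAux_nonneg hfnn hfsum hq0 hq1 _ _ _ _))
      (fun p => mul_le_of_le_one_right (hfnn _ _) (psiAux_le_one hfnn hfsum hq0 hq1 _ _ _ _))
  have SI5 : Summable (fun xy : ℕ × ℕ => (if 1 ≤ xy.1 ∧ xy.1 ≤ u + c i ∧ u + c i - xy.1 + c (T i xy.1) < xy.2 then f xy.1 xy.2 else 0)) :=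
    summable_region hfs hfnn _ (fun xy => f xy.1 xy.2) (fun p => hfnn _ _) (fun p => le_rfl)
  have SG6 : Summable (fun xy : ℕ × ℕ => (if u + c i < xy.1 then f xy.1 xy.2 else 0)) :=
    summable_region hfs hfnn _ (fun xy => f xy.1 xy.2) (fun p => hfnn _ _) (fun p => le_rfl)
  -- collapsing the premium-rule sums
  have collapse1 : (∑ j : Fin l, ∑ x ∈ Finset.range (u + c i + 1),
        t i j x * psi l c T statSet f q j ((u + c i - x : ℕ) : ℤ) n * f x 0)
      = ∑ x ∈ Finset.range (u + c i + 1),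
          f x 0 * psiAux l c T statSet f q (T i x) ((u + c i - x : ℕ) : ℤ) 0 n := by
    rw [Finset.sum_comm]
    refine Finset.sum_congr rfl fun x _ => ?_
    rw [Finset.sum_eq_single (T i x)]
    · rw [hT, if_pos rfl]
      simp only [psi]
      ring
    · intro j _ hj
      rw [hT, if_neg hj, zero_mul, zero_mul]
    · intro h
      exact absurd (Finset.mem_univ _) h
  have collapse3 : (∑ j : Fin l, ∑ x ∈ Finset.Icc 1 (u + c i - 1), ∑ y ∈ Finset.Icc 1 (u + c i - x),
        t i j (x + y) * psi l c T statSet f q j ((u + c i - x - y : ℕ) : ℤ) n * f x y)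
      = ∑ x ∈ Finset.Icc 1 (u + c i - 1), ∑ y ∈ Finset.Icc 1 (u + c i - x),
          f x y * psiAux l c T statSet f q (T i (x + y)) ((u + c i - x - y : ℕ) : ℤ) 0 n := by
    rw [Finset.sum_comm]
    refine Finset.sum_congr rfl fun x _ => ?_
    rw [Finset.sum_comm]
    refine Finset.sum_congr rfl fun y _ => ?_
    rw [Finset.sum_eq_single (T i (x + y))]
    · rw [hT, if_pos rfl]
      simp only [psi]
      ring
    · intro j _ hj
      rw [hT, if_neg hj, zero_mul, zero_mul]
    · intro h
      exact absurd (Finset.mem_univ _) h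
  have collapse4 : (∑ j : Fin l, ∑ x ∈ Finset.Icc 1 (u + c i),
        ∑ y ∈ Finset.Icc 1 (u + c i - x + c j),
        t i j x * psiAux l c T statSet f q j ((u + c i - x : ℕ) : ℤ) y n * f x y)
      = ∑ x ∈ Finset.Icc 1 (u + c i), ∑ y ∈ Finset.Icc 1 (u + c i - x + c (T i x)),
          f x y * psiAux l c T statSet f q (T i x) ((u + c i - x : ℕ) : ℤ) y n := by
    rw [Finset.sum_comm]
    refine Finset.sum_congr rfl fun x _ => ?_
    rw [Finset.sum_eq_single (T i x)]
    · refine Finset.sum_congr rfl fun y _ => ?_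
      rw [hT, if_pos rfl]
      ring
    · intro j _ hj
      refine Finset.sum_eq_zero fun y _ => ?_
      rw [hT, if_neg hj, zero_mul, zero_mul]
    · intro h
      exact absurd (Finset.mem_univ _) h
  have collapse5 : (∑ j : Fin l, ∑ x ∈ Finset.Icc 1 (u + c i), ∑' k : ℕ,
        t i j x * f x (u + c i - x + c j + 1 + k))
      = ∑ x ∈ Finset.Icc 1 (u + c i), ∑' k : ℕ, f x (u + c i - x + c (T i x) + 1 + k) := by
    rw [Finset.sum_comm]
    refine Finset.sum_congr rfl fun x _ => ?_
    rw [Finset.sum_eq_single (T i x)]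
    · refine tsum_congr fun k => ?_
      rw [hT, if_pos rfl, one_mul]
    · intro j _ hj
      have hz : ∀ k : ℕ, t i j x * f x (u + c i - x + c j + 1 + k) = 0 := by
        intro k
        rw [hT, if_neg hj, zero_mul]
      rw [tsum_congr hz, tsum_zero]
    · intro h
      exact absurd (Finset.mem_univ _) h
  constructor
  · -- main recursion
    refine Eq.trans (psiAux_succ hfnn hfsum hq0 hq1 i (u : ℤ) (Int.natCast_nonneg u) 0 n) ?_
    refine Eq.trans (tsum_triple _ hsum1) ?_
    refine Eq.trans (tsum_congr fun xy => hpt xy.1 xy.2) ?_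
    rw [Summable.tsum_add SG1 ((SI2.mul_left (1 - q)).add ((SI3.mul_left (1 - q)).add
        ((SI4.mul_left q).add ((SI5.mul_left q).add SG6)))),
      Summable.tsum_add (SI2.mul_left (1 - q)) ((SI3.mul_left (1 - q)).add
        ((SI4.mul_left q).add ((SI5.mul_left q).add SG6))),
      Summable.tsum_add (SI3.mul_left (1 - q)) ((SI4.mul_left q).add ((SI5.mul_left q).add SG6)),
      Summable.tsum_add (SI4.mul_left q) ((SI5.mul_left q).add SG6),
      Summable.tsum_add (SI5.mul_left q) SG6]
    rw [tsum_T1 hfs hfnn (u + c i) (fun x => psiAux l c T statSet f q (T i x) ((u + c i - x : ℕ) : ℤ) 0 n)]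
    rw [tsum_mul_left, tsum_T2 hfs hfnn (u + c i)]
    rw [tsum_mul_left, tsum_T3 (f := f) (u + c i)
      (fun x y => psiAux l c T statSet f q (T i (x + y)) ((u + c i - x - y : ℕ) : ℤ) 0 n)]
    rw [tsum_mul_left, tsum_T4 hfs hfnn (u + c i) (fun x => u + c i - x + c (T i x))
      (fun x y => psiAux l c T statSet f q (T i x) ((u + c i - x : ℕ) : ℤ) y n)
      (fun x y => psiAux_nonneg hfnn hfsum hq0 hq1 _ _ _ _)
      (fun x y => psiAux_le_one hfnn hfsum hq0 hq1 _ _ _ _)]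
    rw [tsum_mul_left, tsum_T5 hfs hfnn (u + c i) (fun x => u + c i - x + c (T i x))]
    rw [tsum_T6 hfs hfnn (u + c i)]
    rw [collapse1, collapse3, collapse4, collapse5]
    ring
  · -- horizon 1
    refine Eq.trans (psiAux_succ hfnn hfsum hq0 hq1 i (u : ℤ) (Int.natCast_nonneg u) 0 0) ?_
    refine Eq.trans (tsum_triple _ hsum0) ?_
    refine Eq.trans (tsum_congr fun xy => hpt0 xy.1 xy.2) ?_
    rw [Summable.tsum_add (SI2.mul_left (1 - q)) SG6]
    rw [tsum_mul_left, tsum_T2 hfs hfnn (u + c i)]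
    rw [tsum_T6 hfs hfnn (u + c i)]
    ring

end DelayedClaims
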